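/- If (a_n)_{n≥1} and (b_n)_{n≥1} are real sequences each having nonnegative Boolean transform, then their Hadamard product (a_n b_n)_{n≥1} also has nonnegative Boolean transform. -/

import Mathlib

/-!
Put `A i = a i`, `B i = b i` for `i ≥ 1` and `A 0 = B 0 = 1`, so that `A = 1 / (1 - P)` and
`B = 1 / (1 - Q)` for the Boolean transforms `P`, `Q`. Then `A i` is the total `p`-weight of the
compositions of `i`, and `A i * B j` the weight of the pairs (composition of `i`, composition of
`j`). Splitting a pair at its first positive common partial sum `m` gives
`A i * B j = W i j + ∑ₘ ρ m * A (i - m) * B (j - m)`, where `W i j` weighs the pairs with no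
positive common partial sum and `ρ m` the pairs of compositions of `m` meeting only at `0` and `m`.
On the diagonal this is the recursion defining the Boolean transform `r` of `(a n * b n)`, so
`r = ρ ≥ 0`.

No counting is needed: take `r` as given and define `W` (`avoidingWeight`) by the identity above.
Removing the last part of the longer composition, `W i j = ∑ₖ p k * W (i - k) j` for `j < i` (and
symmetrically), while `W n n = 0` for `n ≥ 1` is the recursion for `r`; hence `W ≥ 0` by induction
on `i + j`, and `r n = ∑ₖ p k * W (n - k) n ≥ 0`.
-/

open Finset

section

variable {R : Type*} [CommRing R]

def IsBooleanTransform (a p : ℕ → R) : Prop :=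
  ∀ n, 1 ≤ n → p n = a n - ∑ k ∈ Ico 1 n, a (n - k) * p k

theorem IsBooleanTransform.update_eq_sum {a p : ℕ → R} (h : IsBooleanTransform a p) (n : ℕ)
    (hn : 1 ≤ n) :
    Function.update a 0 1 n = ∑ k ∈ Icc 1 n, p k * Function.update a 0 1 (n - k) := by
  have htail : ∑ k ∈ Ico 1 n, p k * Function.update a 0 1 (n - k) =
      ∑ k ∈ Ico 1 n, a (n - k) * p k :=
    sum_congr rfl fun k hk => by
      rw [Function.update_of_ne (by simp at hk; omega), mul_comm]
  rw [← Ico_insert_right hn, sum_insert right_notMem_Ico, Nat.sub_self, Function.update_self,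
    mul_one, htail, Function.update_of_ne (by omega), h n hn, sub_add_cancel]

def avoidingWeight (A B r : ℕ → R) (i j : ℕ) : R :=
  A i * B j - ∑ m ∈ Icc 1 (min i j), r m * (A (i - m) * B (j - m))

theorem avoidingWeight_comm (A B r : ℕ → R) (i j : ℕ) :
    avoidingWeight A B r i j = avoidingWeight B A r j i := by
  simp only [avoidingWeight, min_comm i j, mul_comm (A _) (B _)]

theorem sum_mul_avoidingWeight {A B p r : ℕ → R}
    (hA : ∀ n, 1 ≤ n → A n = ∑ k ∈ Icc 1 n, p k * A (n - k)) {i : ℕ} (hi : 1 ≤ i) (j : ℕ) :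
    ∑ k ∈ Icc 1 i, p k * avoidingWeight A B r (i - k) j =
      A i * B j - ∑ m ∈ Icc 1 (min (i - 1) j), r m * (A (i - m) * B (j - m)) := by
  have hswap :
      ∑ k ∈ Icc 1 i, p k * ∑ m ∈ Icc 1 (min (i - k) j), r m * (A (i - k - m) * B (j - m)) =
        ∑ m ∈ Icc 1 (min (i - 1) j), r m * (A (i - m) * B (j - m)) := by
    simp_rw [mul_sum]
    rw [sum_comm' (t' := Icc 1 (min (i - 1) j)) (s' := fun m => Icc 1 (i - m))
      (fun k m => by simp only [mem_Icc]; omega)]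
    refine sum_congr rfl fun m hm => ?_
    rw [hA (i - m) (by simp at hm; omega), sum_mul, mul_sum]
    refine sum_congr rfl fun k _ => ?_
    rw [Nat.sub_right_comm]
    ring
  rw [← hswap, hA i hi, sum_mul]
  simp only [avoidingWeight, mul_sub, sum_sub_distrib, mul_assoc]

theorem avoidingWeight_eq_sum_of_lt {A B p r : ℕ → R}
    (hA : ∀ n, 1 ≤ n → A n = ∑ k ∈ Icc 1 n, p k * A (n - k)) {i j : ℕ} (hji : j < i) :
    avoidingWeight A B r i j = ∑ k ∈ Icc 1 i, p k * avoidingWeight A B r (i - k) j := by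
  rw [sum_mul_avoidingWeight hA (by omega), avoidingWeight,
    min_eq_right hji.le, min_eq_right (by omega)]

theorem sum_mul_avoidingWeight_diag {A B p r : ℕ → R}
    (hA : ∀ n, 1 ≤ n → A n = ∑ k ∈ Icc 1 n, p k * A (n - k)) {n : ℕ} (hn : 1 ≤ n) :
    ∑ k ∈ Icc 1 n, p k * avoidingWeight A B r (n - k) n =
      avoidingWeight A B r n n + r n * (A 0 * B 0) := by
  obtain ⟨m, rfl⟩ : ∃ m, n = m + 1 := ⟨n - 1, by omega⟩
  rw [sum_mul_avoidingWeight hA hn, avoidingWeight, min_self, sum_Icc_succ_top (by omega),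
    min_eq_left (by omega), Nat.add_sub_cancel, Nat.sub_self]
  ring

theorem avoidingWeight_nonneg [PartialOrder R] [IsOrderedRing R] {A B p q r : ℕ → R}
    (hA : ∀ n, 1 ≤ n → A n = ∑ k ∈ Icc 1 n, p k * A (n - k))
    (hB : ∀ n, 1 ≤ n → B n = ∑ k ∈ Icc 1 n, q k * B (n - k))
    (hp : ∀ n, 1 ≤ n → 0 ≤ p n) (hq : ∀ n, 1 ≤ n → 0 ≤ q n)
    (hdiag : ∀ n, 0 ≤ avoidingWeight A B r n n) (i j : ℕ) :
    0 ≤ avoidingWeight A B r i j := by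
  induction h : i + j using Nat.strong_induction_on generalizing i j with
  | _ N ih =>
  rcases lt_trichotomy j i with hji | rfl | hij
  · rw [avoidingWeight_eq_sum_of_lt hA hji]
    refine sum_nonneg fun k hk => mul_nonneg (hp k (mem_Icc.1 hk).1) (ih _ ?_ _ _ rfl)
    simp only [mem_Icc] at hk
    omega
  · exact hdiag j
  · rw [avoidingWeight_comm, avoidingWeight_eq_sum_of_lt hB hij]
    refine sum_nonneg fun k hk => mul_nonneg (hq k (mem_Icc.1 hk).1) ?_
    rw [← avoidingWeight_comm]
    refine ih _ ?_ _ _ rfl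
    simp only [mem_Icc] at hk
    omega

end

/-- If the real sequences `(a n)` and `(b n)` both have nonnegative
Boolean transform, then so does their Hadamard product `(a n * b n)`. -/
theorem hadamard_nonneg_boolean_transform (a b p q r : ℕ → ℝ)
    (hp : ∀ n, 1 ≤ n → p n = a n - ∑ k ∈ Finset.Ico 1 n, a (n - k) * p k)
    (hq : ∀ n, 1 ≤ n → q n = b n - ∑ k ∈ Finset.Ico 1 n, b (n - k) * q k)
    (hr : ∀ n, 1 ≤ n → r n = a n * b n - ∑ k ∈ Finset.Ico 1 n, (a (n - k) * b (n - k)) * r k)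
    (hp0 : ∀ n, 1 ≤ n → 0 ≤ p n) (hq0 : ∀ n, 1 ≤ n → 0 ≤ q n) :
    ∀ n, 1 ≤ n → 0 ≤ r n := by
  set A := Function.update a 0 1
  set B := Function.update b 0 1
  have hA := IsBooleanTransform.update_eq_sum hp
  have hB := IsBooleanTransform.update_eq_sum hq
  have hAB : Function.update (fun n => a n * b n) 0 1 = fun n => A n * B n := by
    ext n
    rcases eq_or_ne n 0 with rfl | hn
    · simp [A, B]
    · simp [A, B, Function.update_of_ne hn]
  have hdiag : ∀ n, 1 ≤ n → avoidingWeight A B r n n = 0 := fun n hn => by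
    rw [avoidingWeight, min_self, sub_eq_zero]
    simpa only [hAB] using IsBooleanTransform.update_eq_sum (a := fun n => a n * b n) hr n hn
  have hW := avoidingWeight_nonneg hA hB hp0 hq0 (r := r) fun n => by
    rcases Nat.eq_zero_or_pos n with rfl | hn
    · simp [avoidingWeight]
    · exact (hdiag n hn).ge
  intro n hn
  have hrn := sum_mul_avoidingWeight_diag (B := B) (r := r) hA hn
  simp only [hdiag n hn, A, B, Function.update_self, mul_one, zero_add] at hrn
  rw [← hrn]
  exact sum_nonneg fun k hk => mul_nonneg (hp0 k (mem_Icc.1 hk).1) (hW _ _)
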